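/- arXiv:2507.17018 — 3 statements merged into one kernel-verified Lean document; each statement's English description precedes it below -/
import Mathlib

section
/- Let n ≥ 1, let A be a real symmetric (n+1)×(n+1) matrix, and let V ∈ ℝⁿ. Then Θ̃(A_V) = Θ̃(A), where A_V := L_V A L_Vᵀ and L_V is the (n+1)×(n+1) block lower-triangular matrix [[1, 0],[V, I]] with I the n×n identity. -/
open Matrix
open scoped Classical

/-- The lifted Lagrangian angle of a real symmetric (Hermitian) matrix:
the sum of arctangents of its eigenvalues (with multiplicity). Junk value `0`
if the matrix is not Hermitian. -/
noncomputable def ltheta {n : ℕ} (B : Matrix (Fin n) (Fin n) ℝ) : ℝ :=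
  if h : B.IsHermitian then ∑ i, Real.arctan (h.eigenvalues i) else 0

/-- The matrix `Iₙ = diag(0,1,…,1)` on the index type `Unit ⊕ Fin n`. -/
noncomputable def Inmat (n : ℕ) : Matrix (Unit ⊕ Fin n) (Unit ⊕ Fin n) ℝ :=
  Matrix.fromBlocks 0 0 0 1

/-- The spatial block `A⁺` of a space-time matrix `A = [[a₀₀, aᵀ],[a, A⁺]]`. -/
def Aplus {n : ℕ} (A : Matrix (Unit ⊕ Fin n) (Unit ⊕ Fin n) ℝ) :
    Matrix (Fin n) (Fin n) ℝ :=
  Matrix.of fun i j => A (Sum.inr i) (Sum.inr j)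

/-- Membership in the singular set `𝒮 = {diag(0, A⁺)}`: first row and first
column vanish. -/
def inS {n : ℕ} (A : Matrix (Unit ⊕ Fin n) (Unit ⊕ Fin n) ℝ) : Prop :=
  (∀ j, A (Sum.inl ()) j = 0) ∧ (∀ i, A i (Sum.inl ()) = 0)

/-- The lifted space-time Lagrangian angle `Θ̃(A)`: for `A ∉ 𝒮` the sum of the
principal arguments of the complex eigenvalues (roots of the characteristic
polynomial with multiplicity) of `Iₙ + i A`; for `A ∈ 𝒮` it is `θ̃(A⁺) + π/2`. -/
noncomputable def lTheta {n : ℕ} (A : Matrix (Unit ⊕ Fin n) (Unit ⊕ Fin n) ℝ) : ℝ :=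
  if inS A then ltheta (Aplus A) + Real.pi / 2
  else (((Inmat n).map Complex.ofReal + Complex.I • A.map Complex.ofReal).charpoly.roots.map
      Complex.arg).sum

/-- The pullback `ℓ_V^*A = a₀₀ V Vᵀ + V aᵀ + a Vᵀ + A⁺`. -/
def pullback {n : ℕ} (A : Matrix (Unit ⊕ Fin n) (Unit ⊕ Fin n) ℝ) (V : Fin n → ℝ) :
    Matrix (Fin n) (Fin n) ℝ :=
  Matrix.of fun i j =>
    A (Sum.inl ()) (Sum.inl ()) * V i * V j + V i * A (Sum.inl ()) (Sum.inr j)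
      + A (Sum.inr i) (Sum.inl ()) * V j + A (Sum.inr i) (Sum.inr j)

/-- The block lower-triangular matrix `L_V = [[1,0],[V,I]]`. -/
noncomputable def LV {n : ℕ} (V : Fin n → ℝ) : Matrix (Unit ⊕ Fin n) (Unit ⊕ Fin n) ℝ :=
  Matrix.fromBlocks 1 0 (Matrix.of fun i _ => V i) 1


section RootsCont

open Polynomial Filter

lemma myEvalTendsto {α : Type*} {F : Filter α} {d : ℕ} {p : ℂ[X]} {P : α → ℂ[X]}
    (hpd : p.natDegree ≤ d) (hPd : ∀ a, (P a).natDegree ≤ d)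
    (hc : ∀ i, Tendsto (fun a => (P a).coeff i) F (nhds (p.coeff i))) (z : ℂ) :
    Tendsto (fun a => (P a).eval z) F (nhds (p.eval z)) := by
  have h1 : ∀ a, (P a).eval z = ∑ i ∈ Finset.range (d+1), (P a).coeff i * z ^ i := fun a =>
    eval_eq_sum_range' (Nat.lt_succ_of_le (hPd a)) z
  have h2 : p.eval z = ∑ i ∈ Finset.range (d+1), p.coeff i * z ^ i :=
    eval_eq_sum_range' (Nat.lt_succ_of_le hpd) z
  simp only [h1, h2]
  exact tendsto_finset_sum _ fun i _ => ((hc i).mul tendsto_const_nhds)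

lemma myPowLeProd {η : ℝ} (hη : 0 ≤ η) :
    ∀ (s : Multiset ℝ), (∀ x ∈ s, η ≤ x) → η ^ Multiset.card s ≤ s.prod := by
  intro s
  induction s using Multiset.induction with
  | empty => simp
  | cons a t ih =>
    intro h
    rw [Multiset.prod_cons, Multiset.card_cons, pow_succ, mul_comm]
    exact mul_le_mul (h a (Multiset.mem_cons_self a t))
      (ih fun x hx => h x (Multiset.mem_cons_of_mem hx)) (pow_nonneg hη _)
      (le_trans hη (h a (Multiset.mem_cons_self a t)))

lemma myExistsRootNear {q : ℂ[X]} (hq : q.Monic) {z₀ : ℂ} {η : ℝ} (hη : 0 < η)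
    (hlt : ‖q.eval z₀‖ < η ^ q.natDegree) :
    ∃ w ∈ q.roots, dist w z₀ < η := by
  by_contra hcon
  push_neg at hcon
  have hsplit : q = (q.roots.map fun a => X - C a).prod :=
    (IsAlgClosed.splits q).eq_prod_roots_of_monic hq
  have hcard : Multiset.card q.roots = q.natDegree :=
    (splits_iff_card_roots).mp (IsAlgClosed.splits q)
  have habs : ‖q.eval z₀‖ = ((q.roots.map fun a => ‖z₀ - a‖)).prod := by
    conv_lhs => rw [hsplit]
    rw [eval_multiset_prod, Multiset.map_map]; change (normHom : ℂ →*₀ ℝ) _ = _; rw [map_multiset_prod (normHom : ℂ →*₀ ℝ), Multiset.map_map]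
    congr 1
    apply Multiset.map_congr rfl
    intro a _
    simp
  have hle : η ^ q.natDegree ≤ ‖q.eval z₀‖ := by
    rw [habs, ← hcard, ← Multiset.card_map (fun a => ‖z₀ - a‖) q.roots]
    apply myPowLeProd hη.le
    intro x hx
    obtain ⟨a, ha, rfl⟩ := Multiset.mem_map.mp hx
    have := hcon a ha
    rwa [dist_comm, Complex.dist_eq] at this
  exact absurd hlt (not_lt.mpr hle)

theorem myRootsTendsto {α : Type*} (d : ℕ) {F : Filter α} :
    ∀ (p : ℂ[X]) (P : α → ℂ[X]), p.Monic → p.natDegree = d →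
    (∀ a, (P a).Monic) → (∀ a, (P a).natDegree = d) →
    (∀ i, Tendsto (fun a => (P a).coeff i) F (nhds (p.coeff i))) →
    ∀ ε : ℝ, 0 < ε →
      ∀ᶠ a in F, Multiset.Rel (fun z w => dist z w < ε) (P a).roots p.roots := by
  induction d with
  | zero =>
    intro p P hp hpd hP hPd hc ε hε
    have hp1 : p = 1 := hp.natDegree_eq_zero.mp hpd
    refine Eventually.of_forall fun a => ?_
    have hP1 : P a = 1 := (hP a).natDegree_eq_zero.mp (hPd a)
    rw [hp1, hP1, roots_one]
    exact Multiset.Rel.zero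
  | succ d ih =>
    intro p P hp hpd hP hPd hc ε hε
    obtain ⟨z₀, hz₀⟩ := Complex.exists_root (f := p)
      (by rw [degree_eq_natDegree hp.ne_zero, hpd]; exact_mod_cast Nat.succ_pos d)
    set p₁ := p /ₘ (X - C z₀) with hp₁def
    have hpkey : (X - C z₀) * p₁ = p := (mul_divByMonic_eq_iff_isRoot).mpr hz₀
    have hp₁monic : p₁.Monic := by
      have h2 : (X - C z₀).leadingCoeff * p₁.leadingCoeff = 1 := by
        rw [← leadingCoeff_mul, hpkey]; exact hp
      rwa [(monic_X_sub_C z₀).leadingCoeff, one_mul] at h2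
    have hp₁d : p₁.natDegree = d := by
      have := natDegree_divByMonic p (monic_X_sub_C z₀)
      rw [hpd, natDegree_X_sub_C] at this
      simpa using this
    have hproots : p.roots = z₀ ::ₘ p₁.roots := by
      conv_lhs => rw [← hpkey]
      rw [roots_mul (by rw [hpkey]; exact hp.ne_zero), roots_X_sub_C, Multiset.singleton_add]
    -- pick nearest roots
    have hPcard : ∀ a, Multiset.card (P a).roots = d + 1 := fun a => by
      rw [(splits_iff_card_roots).mp (IsAlgClosed.splits (P a)), hPd a]
    have hmin : ∀ a, ∃ w, w ∈ (P a).roots ∧ ∀ w' ∈ (P a).roots, dist w z₀ ≤ dist w' z₀ := by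
      intro a
      have hne : (P a).roots.toFinset.Nonempty := by
        rw [Multiset.toFinset_nonempty]
        intro h0
        have := hPcard a
        rw [h0] at this
        simp at this
      obtain ⟨w, hw, hmw⟩ := Finset.exists_min_image ((P a).roots.toFinset)
        (fun w => dist w z₀) hne
      exact ⟨w, Multiset.mem_toFinset.mp hw,
        fun w' hw' => hmw w' (Multiset.mem_toFinset.mpr hw')⟩
    choose w hwroot hwmin using hmin
    have hwt : Tendsto w F (nhds z₀) := by
      rw [Metric.tendsto_nhds]
      intro η hη
      have h0 : Tendsto (fun a => (P a).eval z₀) F (nhds 0) := by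
        have := myEvalTendsto (d := d + 1) hpd.le (fun a => (hPd a).le) hc z₀
        rwa [hz₀.eq_zero] at this
      have hev : ∀ᶠ a in F, ‖(P a).eval z₀‖ < η ^ (d + 1) := by
        have := Metric.tendsto_nhds.mp h0 (η ^ (d+1)) (pow_pos hη _)
        simpa [Complex.dist_eq] using this
      filter_upwards [hev] with a ha
      obtain ⟨r, hr, hrd⟩ := myExistsRootNear (hP a) hη (by rwa [hPd a])
      exact lt_of_le_of_lt (hwmin a r hr) hrd
    set Q : α → ℂ[X] := fun a => (P a) /ₘ (X - C (w a)) with hQdef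
    have hQkey : ∀ a, (X - C (w a)) * Q a = P a := fun a =>
      (mul_divByMonic_eq_iff_isRoot).mpr (isRoot_of_mem_roots (hwroot a))
    have hQmonic : ∀ a, (Q a).Monic := by
      intro a
      have h2 : (X - C (w a)).leadingCoeff * (Q a).leadingCoeff = 1 := by
        rw [← leadingCoeff_mul, hQkey a]; exact hP a
      rwa [(monic_X_sub_C (w a)).leadingCoeff, one_mul] at h2
    have hQd : ∀ a, (Q a).natDegree = d := by
      intro a
      have := natDegree_divByMonic (P a) (monic_X_sub_C (w a))
      rw [hPd a, natDegree_X_sub_C] at this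
      simpa using this
    have hQroots : ∀ a, (P a).roots = w a ::ₘ (Q a).roots := by
      intro a
      conv_lhs => rw [← hQkey a]
      rw [roots_mul (by rw [hQkey a]; exact (hP a).ne_zero), roots_X_sub_C,
        Multiset.singleton_add]
    have key : ∀ k i, d ≤ i + k →
        Tendsto (fun a => (Q a).coeff i) F (nhds (p₁.coeff i)) := by
      intro k
      induction k with
      | zero =>
        intro i hi
        rcases eq_or_lt_of_le hi with h | h
        · have hid : i = d := by omega
          subst hid
          have h1 : ∀ a, (Q a).coeff i = 1 := fun a => by
            have := (hQmonic a).coeff_natDegree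
            rwa [hQd a] at this
          have h2 : p₁.coeff i = 1 := by
            have := hp₁monic.coeff_natDegree
            rwa [hp₁d] at this
          simp only [h1, h2]
          exact tendsto_const_nhds
        · have h1 : ∀ a, (Q a).coeff i = 0 := fun a =>
            coeff_eq_zero_of_natDegree_lt (by rw [hQd a]; omega)
          have h2 : p₁.coeff i = 0 := coeff_eq_zero_of_natDegree_lt (by rw [hp₁d]; omega)
          simp only [h1, h2]
          exact tendsto_const_nhds
      | succ k ihk =>
        intro i _
        have h1 := ihk (i + 1) (by omega)
        have hrec : ∀ a, (Q a).coeff i = (P a).coeff (i+1) + w a * (Q a).coeff (i+1) :=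
          fun a => coeff_divByMonic_X_sub_C_rec (P a) (w a) i
        have hrecp : p₁.coeff i = p.coeff (i+1) + z₀ * p₁.coeff (i+1) :=
          coeff_divByMonic_X_sub_C_rec p z₀ i
        simp only [hrec, hrecp]
        exact (hc (i+1)).add (hwt.mul h1)
    have hQc : ∀ i, Tendsto (fun a => (Q a).coeff i) F (nhds (p₁.coeff i)) :=
      fun i => key d i (by omega)
    have hres := ih p₁ Q hp₁monic hp₁d hQmonic hQd hQc ε hε
    have hwε : ∀ᶠ a in F, dist (w a) z₀ < ε := Metric.tendsto_nhds.mp hwt ε hε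
    filter_upwards [hres, hwε] with a ha haw
    rw [hQroots a, hproots]
    exact Multiset.Rel.cons haw ha

end RootsCont




section Algebra

variable {n : ℕ}

lemma inS_fixed {B : Matrix (Unit ⊕ Fin n) (Unit ⊕ Fin n) ℝ} (hB : inS B) (W : Fin n → ℝ) :
    LV W * B * (LV W)ᵀ = B := by
  have hB' : B = Matrix.fromBlocks 0 0 0 (B.toBlocks₂₂) := by
    ext i j
    rcases i with i | i <;> rcases j with j | j
    · simpa [Matrix.fromBlocks] using hB.1 (Sum.inl j)
    · simpa [Matrix.fromBlocks] using hB.1 (Sum.inr j)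
    · simpa [Matrix.fromBlocks] using hB.2 (Sum.inr i)
    · simp [Matrix.fromBlocks, Matrix.toBlocks₂₂]
  rw [hB', LV, Matrix.fromBlocks_transpose, Matrix.fromBlocks_multiply,
    Matrix.fromBlocks_multiply]
  simp

lemma LV_mul_LV_neg (W : Fin n → ℝ) : LV (-W) * LV W = 1 := by
  rw [LV, LV, Matrix.fromBlocks_multiply]
  simp [← Matrix.fromBlocks_one]
  ext i j
  simp [Matrix.add_apply]

lemma inS_LV_iff {B : Matrix (Unit ⊕ Fin n) (Unit ⊕ Fin n) ℝ} (W : Fin n → ℝ)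
    (h : inS (LV W * B * (LV W)ᵀ)) : inS B := by
  have h2 := inS_fixed h (-W)
  have h3 : LV (-W) * (LV W * B * (LV W)ᵀ) * (LV (-W))ᵀ = B := by
    rw [show LV (-W) * (LV W * B * (LV W)ᵀ) * (LV (-W))ᵀ
        = (LV (-W) * LV W) * B * ((LV (-W) * LV W))ᵀ by
      rw [Matrix.transpose_mul]; simp only [Matrix.mul_assoc]]
    rw [LV_mul_LV_neg]
    simp
  rw [h3] at h2
  rw [h2]
  exact h

lemma inS_Inmat : inS (Inmat n) := by
  constructor <;> intro j <;> cases j <;> rfl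

end Algebra

noncomputable def Mc {n : ℕ} (B : Matrix (Unit ⊕ Fin n) (Unit ⊕ Fin n) ℝ) :
    Matrix (Unit ⊕ Fin n) (Unit ⊕ Fin n) ℂ :=
  (Inmat n).map Complex.ofReal + Complex.I • B.map Complex.ofReal

lemma eval_charpoly' {m : Type*} [Fintype m] [DecidableEq m] (M : Matrix m m ℂ) (z : ℂ) :
    M.charpoly.eval z = (z • (1 : Matrix m m ℂ) - M).det := by
  have h1 : M.charpoly.eval z = (Polynomial.evalRingHom z) (M.charmatrix.det) := rfl
  rw [h1, RingHom.map_det]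
  congr 1
  ext i j
  by_cases h : i = j
  · subst h
    simp [Matrix.charmatrix_apply_eq, Matrix.one_apply]
  · simp [Matrix.charmatrix_apply_ne _ _ _ h, Matrix.one_apply_ne h, h]

lemma conj_dot {m : Type*} [Fintype m] (M : Matrix m m ℂ) (hM : M.IsHermitian) (x : m → ℂ) :
    (starRingEnd ℂ) (star x ⬝ᵥ M.mulVec x) = star x ⬝ᵥ M.mulVec x := by
  have h1 : (starRingEnd ℂ) (star x ⬝ᵥ M.mulVec x) = star (star x ⬝ᵥ M.mulVec x) := rfl
  rw [h1]
  conv_lhs => rw [star_dotProduct, star_star]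
  rw [star_mulVec, ← dotProduct_mulVec, hM.eq]

lemma herm_map {m : Type*} {B : Matrix m m ℝ} (hB : B.IsHermitian) :
    (B.map Complex.ofReal).IsHermitian := by
  ext i j
  have := congrFun (congrFun hB i) j
  simp only [Matrix.conjTranspose_apply, star_trivial] at this
  simp only [Matrix.conjTranspose_apply, Matrix.map_apply, Complex.star_def,
    Complex.conj_ofReal]
  exact_mod_cast this

lemma Ic_mulVec {n : ℕ} (x : (Unit ⊕ Fin n) → ℂ) :
    ((Inmat n).map Complex.ofReal).mulVec x
      = fun i => Sum.elim (fun _ => (0 : ℂ)) (fun j => x (Sum.inr j)) i := by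
  funext i
  rcases i with i | i
  · simp [Matrix.mulVec, dotProduct, Inmat, Matrix.fromBlocks]
  · simp [Matrix.mulVec, dotProduct, Inmat, Matrix.fromBlocks,
      Fintype.sum_sum_type, Matrix.one_apply, apply_ite Complex.ofReal, ite_mul]

lemma root_key {n : ℕ} {B : Matrix (Unit ⊕ Fin n) (Unit ⊕ Fin n) ℝ} (hB : B.IsHermitian)
    {x : (Unit ⊕ Fin n) → ℂ} (hx : x ≠ 0) {z : ℂ} (hMx : (Mc B).mulVec x = z • x) :
    0 ≤ z.re ∧ (z = 0 → inS B) := by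
  classical
  set s : ℝ := ∑ i, Complex.normSq (x i) with hs
  have hxs : star x ⬝ᵥ x = (s : ℂ) := by
    simp only [dotProduct, Pi.star_apply, hs]
    push_cast
    apply Finset.sum_congr rfl
    intro i _
    rw [Complex.normSq_eq_conj_mul_self]
    rfl
  have hspos : 0 < s := by
    have hxne : ∃ i, x i ≠ 0 := by
      by_contra hcon
      push_neg at hcon
      exact hx (funext hcon)
    obtain ⟨i0, hi0⟩ := hxne
    apply Finset.sum_pos' (fun i _ => Complex.normSq_nonneg _)
    exact ⟨i0, Finset.mem_univ _, Complex.normSq_pos.mpr hi0⟩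
  set ur : ℝ := ∑ j : Fin n, Complex.normSq (x (Sum.inr j)) with hur
  have hu : star x ⬝ᵥ (((Inmat n).map Complex.ofReal).mulVec x) = (ur : ℂ) := by
    rw [Ic_mulVec]
    simp only [dotProduct, Pi.star_apply, hur]
    rw [Fintype.sum_sum_type]
    push_cast
    simp only [Sum.elim_inl, Sum.elim_inr, mul_zero, Finset.sum_const_zero, zero_add]
    apply Finset.sum_congr rfl
    intro j _
    rw [Complex.normSq_eq_conj_mul_self]
    rfl
  set v : ℂ := star x ⬝ᵥ ((B.map Complex.ofReal).mulVec x) with hv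
  have hvre' : v = (v.re : ℂ) := by
    have := conj_dot _ (herm_map hB) x
    rw [← hv] at this
    exact (Complex.conj_eq_iff_re.mp this).symm
  have hE : (ur : ℂ) + Complex.I * v = z * (s : ℂ) := by
    have h2 : star x ⬝ᵥ ((Mc B).mulVec x) = z * (s : ℂ) := by
      rw [hMx, dotProduct_smul, hxs, smul_eq_mul]
    rw [← h2, Mc, Matrix.add_mulVec, dotProduct_add, hu, Matrix.smul_mulVec,
      dotProduct_smul, smul_eq_mul]
  have hre : ur = z.re * s := by
    have := congrArg Complex.re hE
    rw [hvre'] at this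
    simpa using this
  have hurnn : 0 ≤ ur := Finset.sum_nonneg fun j _ => Complex.normSq_nonneg _
  constructor
  · by_contra hneg
    push_neg at hneg
    have : z.re * s < 0 := mul_neg_of_neg_of_pos hneg hspos
    rw [← hre] at this
    exact absurd this (not_lt.mpr hurnn)
  · intro hz0
    subst hz0
    have hur0 : ur = 0 := by rw [hre]; simp
    have hxr : ∀ j : Fin n, x (Sum.inr j) = 0 := by
      intro j
      have := (Finset.sum_eq_zero_iff_of_nonneg
        (fun j (_ : j ∈ Finset.univ) => Complex.normSq_nonneg (x (Sum.inr j)))).mp hur0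
      have hj := this j (Finset.mem_univ j)
      exact Complex.normSq_eq_zero.mp hj
    have hx0 : x (Sum.inl ()) ≠ 0 := by
      intro hc
      apply hx
      funext i
      rcases i with i | i
      · cases i; exact hc
      · exact hxr i
    have hIx : ((Inmat n).map Complex.ofReal).mulVec x = 0 := by
      rw [Ic_mulVec]
      funext i
      rcases i with i | i
      · rfl
      · exact hxr i
    have hBx : (B.map Complex.ofReal).mulVec x = 0 := by
      have h0 : (Mc B).mulVec x = 0 := by rw [hMx, zero_smul]
      rw [Mc, Matrix.add_mulVec, hIx, zero_add, Matrix.smul_mulVec] at h0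
      have := smul_eq_zero.mp h0
      rcases this with h | h
      · exact absurd h Complex.I_ne_zero
      · exact h
    have hcol : ∀ i, B i (Sum.inl ()) = 0 := by
      intro i
      have hBi : ((B.map Complex.ofReal).mulVec x) i = 0 := by rw [hBx]; rfl
      rw [Matrix.mulVec, dotProduct, Fintype.sum_sum_type] at hBi
      simp only [Matrix.map_apply] at hBi
      have hsum : ∀ j : Fin n, (B i (Sum.inr j) : ℂ) * x (Sum.inr j) = 0 := fun j => by
        rw [hxr j, mul_zero]
      rw [Finset.sum_eq_zero (fun j _ => hsum j)] at hBi
      simp only [Finset.univ_unique, Finset.sum_singleton, add_zero] at hBi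
      have := mul_eq_zero.mp hBi
      rcases this with h | h
      · exact_mod_cast h
      · exact absurd h hx0
    refine ⟨fun j => ?_, hcol⟩
    have := congrFun (congrFun hB (Sum.inl ())) j
    simp only [Matrix.conjTranspose_apply, star_trivial] at this
    rw [← this]
    exact hcol j

lemma detLV {n : ℕ} (W : Fin n → ℝ) : (LV W).det = 1 := by
  rw [LV, Matrix.det_fromBlocks_zero₁₂]
  simp

lemma Mc_conj {n : ℕ} (B : Matrix (Unit ⊕ Fin n) (Unit ⊕ Fin n) ℝ) (W : Fin n → ℝ) :
    ((LV W).map Complex.ofReal) * Mc B * (((LV W).map Complex.ofReal)ᵀ)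
      = Mc (LV W * B * (LV W)ᵀ) := by
  have hmap : ∀ (M N : Matrix (Unit ⊕ Fin n) (Unit ⊕ Fin n) ℝ),
      (M * N).map Complex.ofReal = M.map Complex.ofReal * N.map Complex.ofReal := by
    intro M N
    ext i j
    simp [Matrix.map_apply, Matrix.mul_apply]
  have hIc : ((LV W).map Complex.ofReal) * ((Inmat n).map Complex.ofReal)
      * (((LV W).map Complex.ofReal)ᵀ) = (Inmat n).map Complex.ofReal := by
    rw [← Matrix.transpose_map, ← hmap, ← hmap, inS_fixed inS_Inmat W]
  have hBc : ((LV W).map Complex.ofReal) * (B.map Complex.ofReal)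
      * (((LV W).map Complex.ofReal)ᵀ) = (LV W * B * (LV W)ᵀ).map Complex.ofReal := by
    rw [← Matrix.transpose_map, ← hmap, ← hmap]
  rw [Mc, Mc, Matrix.mul_add, Matrix.add_mul, hIc, Matrix.mul_smul, Matrix.smul_mul, hBc]

lemma Mc_det_conj {n : ℕ} (B : Matrix (Unit ⊕ Fin n) (Unit ⊕ Fin n) ℝ) (W : Fin n → ℝ) :
    (Mc (LV W * B * (LV W)ᵀ)).det = (Mc B).det := by
  rw [← Mc_conj, Matrix.det_mul, Matrix.det_mul, Matrix.det_transpose]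
  have h1 : ((LV W).map Complex.ofReal).det = 1 := by
    have := RingHom.map_det Complex.ofRealHom (LV W)
    rw [detLV] at this
    simp only [_root_.map_one] at this
    rw [show ((LV W).map Complex.ofReal) = Complex.ofRealHom.mapMatrix (LV W) from rfl, ← this]
  rw [h1, one_mul, mul_one]

lemma prod_roots_det {m : Type*} [Fintype m] [DecidableEq m] (M : Matrix m m ℂ) :
    (M.charpoly.roots).prod = M.det := by
  have hm := M.charpoly_monic
  have hsp : Polynomial.Splits M.charpoly :=
    IsAlgClosed.splits M.charpoly
  have hsplit := hsp.eq_prod_roots_of_monic hm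
  have hcard : Multiset.card M.charpoly.roots = Fintype.card m := by
    rw [Polynomial.splits_iff_card_roots.mp hsp, Matrix.charpoly_natDegree_eq_dim]
  have hev : M.charpoly.eval 0 = (-1) ^ (Fintype.card m) * M.det := by
    rw [eval_charpoly']
    simp [Matrix.det_neg]
  have hev2 : M.charpoly.eval 0
      = (-1) ^ (Fintype.card m) * (M.charpoly.roots).prod := by
    conv_lhs => rw [hsplit]
    rw [Polynomial.eval_multiset_prod, Multiset.map_map]
    have : ((fun a => Polynomial.eval 0 (Polynomial.X - Polynomial.C a)) : ℂ → ℂ)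
        = Neg.neg := by
      funext a; simp
    rw [Function.comp_def]
    simp only [Polynomial.eval_sub, Polynomial.eval_X, Polynomial.eval_C, zero_sub]
    rw [show (fun a : ℂ => -a) = Neg.neg from rfl, Multiset.prod_map_neg, hcard]
  have := hev2.symm.trans hev
  exact mul_left_cancel₀ (pow_ne_zero _ (neg_ne_zero.mpr one_ne_zero)) this


lemma exp_arg_sum (s : Multiset ℂ) :
    Complex.exp (((s.map Complex.arg).sum : ℝ) * Complex.I)
      * (((s.map (‖·‖)).prod : ℝ) : ℂ) = s.prod := by
  induction s using Multiset.induction with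
  | empty => simp
  | cons a t ih =>
    simp only [Multiset.map_cons, Multiset.prod_cons, Multiset.sum_cons]
    push_cast
    rw [add_mul, Complex.exp_add]
    calc Complex.exp (↑a.arg * Complex.I) * Complex.exp (↑(t.map Complex.arg).sum * Complex.I)
          * ((‖a‖ : ℂ) * ((t.map (‖·‖)).prod : ℝ))
        = ((‖a‖ : ℂ) * Complex.exp (↑a.arg * Complex.I))
          * (Complex.exp (↑(t.map Complex.arg).sum * Complex.I)
            * (((t.map (‖·‖)).prod : ℝ) : ℂ)) := by ring
      _ = a * t.prod := by rw [Complex.norm_mul_exp_arg_mul_I, ih]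

lemma abs_prod_multiset (s : Multiset ℂ) :
    (s.map (‖·‖)).prod = ‖s.prod‖ := by
  induction s using Multiset.induction with
  | empty => simp
  | cons a t ih => simp [ih, _root_.map_mul]

lemma rel_sum_bound {g : ℂ → ℝ} {c : ℝ} :
    ∀ {s u : Multiset ℂ}, Multiset.Rel (fun a b => |g a - g b| ≤ c) s u →
      |(s.map g).sum - (u.map g).sum| ≤ c * (Multiset.card u) := by
  intro s u h
  induction h with
  | zero => simp
  | @cons a b as bs hab _ ih =>
    simp only [Multiset.map_cons, Multiset.sum_cons, Multiset.card_cons]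
    have heq : g a + (as.map g).sum - (g b + (bs.map g).sum)
        = (g a - g b) + ((as.map g).sum - (bs.map g).sum) := by ring
    rw [heq]
    calc |(g a - g b) + ((as.map g).sum - (bs.map g).sum)|
        ≤ |g a - g b| + |(as.map g).sum - (bs.map g).sum| := abs_add_le _ _
      _ ≤ c + c * (Multiset.card bs) := add_le_add hab ih
      _ = c * ((Multiset.card bs : ℝ) + 1) := by ring
      _ = c * ((Multiset.card bs + 1 : ℕ) : ℝ) := by push_cast; ring

lemma charpoly_coeff_eq {m : Type*} [Fintype m] [DecidableEq m] (M : Matrix m m ℂ) (i : ℕ) :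
    M.charpoly.coeff i = ∑ j ∈ Finset.range (Fintype.card m + 1),
      ((j : ℂ) • (1 : Matrix m m ℂ) - M).det
        * (Lagrange.basis (Finset.range (Fintype.card m + 1)) (fun k : ℕ => (k : ℂ)) j).coeff i := by
  have hinj : Set.InjOn (fun k : ℕ => (k : ℂ)) (Finset.range (Fintype.card m + 1)) :=
    fun a _ b _ h => Nat.cast_injective h
  have hdeg : M.charpoly.degree < (Finset.range (Fintype.card m + 1)).card := by
    rw [Finset.card_range, Matrix.charpoly_degree_eq_dim]
    exact_mod_cast Nat.lt_succ_self _
  conv_lhs => rw [Lagrange.eq_interpolate hinj hdeg]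
  rw [Lagrange.interpolate_apply, Polynomial.finset_sum_coeff]
  apply Finset.sum_congr rfl
  intro j _
  rw [Polynomial.coeff_C_mul, eval_charpoly']


/-- `Θ̃(A_V) = Θ̃(A)` where `A_V = L_V A L_Vᵀ`. -/
theorem stmt1 (n : ℕ) (hn : 1 ≤ n) (A : Matrix (Unit ⊕ Fin n) (Unit ⊕ Fin n) ℝ)
    (hA : A.IsHermitian) (V : Fin n → ℝ) :
    lTheta (LV V * A * (LV V)ᵀ) = lTheta A := by
  by_cases hS : inS A
  · rw [inS_fixed hS V]
  · set Bf : ℝ → Matrix (Unit ⊕ Fin n) (Unit ⊕ Fin n) ℝ :=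
      fun t => LV (t • V) * A * (LV (t • V))ᵀ with hBf
    have hBf0 : Bf 0 = A := by
      have hLV0 : LV ((0 : ℝ) • V) = 1 := by
        ext i j
        rcases i with i | i <;> rcases j with j | j <;>
          simp [LV, Matrix.fromBlocks, Matrix.one_apply]
      rw [hBf]
      simp only [hLV0, Matrix.transpose_one, Matrix.one_mul, Matrix.mul_one]
    have hBf1 : Bf 1 = LV V * A * (LV V)ᵀ := by rw [hBf]; simp only [one_smul]
    have hnotS : ∀ t, ¬ inS (Bf t) := fun t h => hS (inS_LV_iff _ h)
    have hAT : Aᵀ = A := by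
      have := hA.eq
      rwa [Matrix.conjTranspose_eq_transpose_of_trivial] at this
    have hherm : ∀ t, (Bf t).IsHermitian := by
      intro t
      show _ᴴ = _
      rw [Matrix.conjTranspose_eq_transpose_of_trivial]
      rw [hBf]
      rw [Matrix.transpose_mul, Matrix.transpose_mul, Matrix.transpose_transpose, hAT]
      simp only [Matrix.mul_assoc]
    have hdetc : ∀ t, (Mc (Bf t)).det = (Mc A).det := fun t => Mc_det_conj A (t • V)
    have hdet0 : (Mc A).det ≠ 0 := by
      intro h0
      obtain ⟨x, hx, hxv⟩ := Matrix.exists_mulVec_eq_zero_iff.mpr h0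
      exact hS ((root_key hA hx (by rw [zero_smul]; exact hxv)).2 rfl)
    set N := Fintype.card (Unit ⊕ Fin n) with hN
    have hNval : (N : ℝ) = n + 1 := by
      rw [hN]; simp [Fintype.card_sum]; ring
    set P : ℝ → Polynomial ℂ := fun t => (Mc (Bf t)).charpoly with hP
    set f : ℝ → ℝ := fun t => ((P t).roots.map Complex.arg).sum with hf
    have hPmonic : ∀ t, (P t).Monic := fun t => (Mc (Bf t)).charpoly_monic
    have hPdeg : ∀ t, (P t).natDegree = N := fun t => Matrix.charpoly_natDegree_eq_dim _
    have hroots : ∀ t, ∀ z ∈ (P t).roots, 0 ≤ z.re ∧ z ≠ 0 := by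
      intro t z hz
      have hev : (P t).eval z = 0 := Polynomial.isRoot_of_mem_roots hz
      rw [hP] at hev
      rw [eval_charpoly'] at hev
      obtain ⟨x, hx, hxv⟩ := Matrix.exists_mulVec_eq_zero_iff.mpr hev
      have hMx : (Mc (Bf t)).mulVec x = z • x := by
        rw [Matrix.sub_mulVec, Matrix.smul_mulVec, Matrix.one_mulVec, sub_eq_zero] at hxv
        exact hxv.symm
      have hk := root_key (hherm t) hx hMx
      exact ⟨hk.1, fun h0 => hnotS t (hk.2 h0)⟩
    have hexp : ∀ t, Complex.exp ((f t : ℝ) * Complex.I)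
        * ((‖(Mc A).det‖ : ℝ) : ℂ) = (Mc A).det := by
      intro t
      have h1 := exp_arg_sum (P t).roots
      rw [abs_prod_multiset] at h1
      have h2 : (P t).roots.prod = (Mc (Bf t)).det := prod_roots_det _
      rw [h2, hdetc t] at h1
      exact h1
    have hexp2 : ∀ t s, Complex.exp ((f t : ℝ) * Complex.I)
        = Complex.exp ((f s : ℝ) * Complex.I) := by
      intro t s
      have habs : ((‖(Mc A).det‖ : ℝ) : ℂ) ≠ 0 := by
        simp only [ne_eq, Complex.ofReal_eq_zero, norm_eq_zero]
        exact hdet0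
      exact mul_right_cancel₀ habs ((hexp t).trans (hexp s).symm)
    have hcont : Continuous fun t => Mc (Bf t) := by
      have hE : Continuous fun t : ℝ => LV (t • V) := by
        have heq : (fun t : ℝ => LV (t • V))
            = fun t => (1 : Matrix (Unit ⊕ Fin n) (Unit ⊕ Fin n) ℝ) + t • (LV V - 1) := by
          funext t; ext i j
          rcases i with i | i <;> rcases j with j | j <;>
            simp [LV, Matrix.fromBlocks, Matrix.one_apply] <;> ring
        rw [heq]
        exact continuous_const.add (continuous_id.smul continuous_const)
      have hBc : Continuous Bf := by
        rw [hBf]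
        exact (hE.matrix_mul continuous_const).matrix_mul hE.matrix_transpose
      have hmapc : Continuous fun t => (Bf t).map Complex.ofReal :=
        hBc.matrix_map Complex.continuous_ofReal
      exact continuous_const.add (hmapc.const_smul Complex.I)
    have hcoeff : ∀ (t₀ : ℝ) (i : ℕ), Filter.Tendsto (fun t => (P t).coeff i)
        (nhds t₀) (nhds ((P t₀).coeff i)) := by
      intro t₀ i
      have hcc : Continuous fun t => (P t).coeff i := by
        have h2 : (fun t => (P t).coeff i) = fun t =>
            ∑ j ∈ Finset.range (N + 1), ((j : ℂ) • (1 : Matrix (Unit ⊕ Fin n) (Unit ⊕ Fin n) ℂ)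
              - Mc (Bf t)).det
              * (Lagrange.basis (Finset.range (N + 1)) (fun k : ℕ => (k : ℂ)) j).coeff i := by
          funext t
          exact charpoly_coeff_eq _ i
        rw [h2]
        apply continuous_finset_sum
        intro j _
        exact ((continuous_const.sub hcont).matrix_det).mul continuous_const
      exact hcc.tendsto t₀
    have hcardroots : ∀ t, Multiset.card (P t).roots = N := fun t => by
      rw [Polynomial.splits_iff_card_roots.mp (IsAlgClosed.splits (P t)), hPdeg t]
    have hloc : ∀ t₀ : ℝ, ∀ᶠ t in nhds t₀, f t = f t₀ := by
      intro t₀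
      set c : ℝ := Real.pi / (n + 2) with hc
      have hcpos : 0 < c := by
        rw [hc]
        have := Real.pi_pos
        positivity
      have hslit : ∀ z ∈ (P t₀).roots, z ∈ Complex.slitPlane := by
        intro z hz
        rcases hroots t₀ z hz with ⟨hre, hz0⟩
        rw [Complex.mem_slitPlane_iff]
        rcases lt_or_eq_of_le hre with h | h
        · exact Or.inl h
        · exact Or.inr fun him => hz0 (Complex.ext h.symm him)
      have hdelta : ∀ z : ℂ, ∃ δ : ℝ, 0 < δ ∧ (z ∈ (P t₀).roots → ∀ w : ℂ,
          dist w z < δ → |Complex.arg w - Complex.arg z| ≤ c) := by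
        intro z
        by_cases hz : z ∈ (P t₀).roots
        · obtain ⟨δ, hδ, h2⟩ :=
            Metric.continuousAt_iff.mp (Complex.continuousAt_arg (hslit z hz)) c hcpos
          refine ⟨δ, hδ, fun _ w hw => ?_⟩
          have h3 := h2 hw
          rw [Real.dist_eq] at h3
          exact h3.le
        · exact ⟨1, one_pos, fun h => absurd h hz⟩
      choose δf hδf1 hδf2 using hdelta
      have hne : (P t₀).roots.toFinset.Nonempty := by
        rw [Multiset.toFinset_nonempty]
        intro h0
        have hcz := hcardroots t₀
        rw [h0] at hcz
        rw [hN] at hcz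
        simp [Fintype.card_sum] at hcz
        omega
      have hεpos : 0 < (P t₀).roots.toFinset.inf' hne δf :=
        (Finset.lt_inf'_iff hne).mpr fun z _ => hδf1 z
      set ε := (P t₀).roots.toFinset.inf' hne δf with hε
      have hrel := myRootsTendsto N (P t₀) P (hPmonic t₀) (hPdeg t₀) hPmonic hPdeg
        (hcoeff t₀) ε hεpos
      filter_upwards [hrel] with t hrelt
      have hrel2 : Multiset.Rel (fun a b => |Complex.arg a - Complex.arg b| ≤ c)
          (P t).roots (P t₀).roots := by
        apply hrelt.mono
        intro a _ b hb hab
        have h1 : ε ≤ δf b := Finset.inf'_le _ (Multiset.mem_toFinset.mpr hb)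
        exact hδf2 b hb a (lt_of_lt_of_le hab h1)
      have hbound := rel_sum_bound hrel2
      rw [hcardroots t₀] at hbound
      have hlt : c * (N : ℝ) < 2 * Real.pi := by
        rw [hNval, hc]
        have hpi := Real.pi_pos
        rw [div_mul_eq_mul_div, div_lt_iff₀ (by positivity)]
        nlinarith
      obtain ⟨k, hk⟩ := Complex.exp_eq_exp_iff_exists_int.mp (hexp2 t t₀)
      have hreal : f t - f t₀ = k * (2 * Real.pi) := by
        have h2 : ((f t - f t₀ - k * (2 * Real.pi) : ℝ) : ℂ) * Complex.I = 0 := by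
          push_cast
          linear_combination hk
        rcases mul_eq_zero.mp h2 with h | h
        · have := Complex.ofReal_eq_zero.mp h
          linarith
        · exact absurd h Complex.I_ne_zero
      have habsk : |(k : ℝ)| * (2 * Real.pi) < 2 * Real.pi := by
        have h3 : |(k : ℝ) * (2 * Real.pi)| < 2 * Real.pi := by
          rw [← hreal]
          exact lt_of_le_of_lt hbound hlt
        rwa [abs_mul, abs_of_pos (by positivity : (0:ℝ) < 2 * Real.pi)] at h3
      have hk0 : k = 0 := by
        have h4 : |(k : ℝ)| < 1 := by
          have h2pi : (0:ℝ) < 2 * Real.pi := by positivity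
          nlinarith [abs_nonneg (k : ℝ)]
        have h5 : |k| < 1 := by exact_mod_cast (by rwa [← Int.cast_abs] at h4 : ((|k| : ℤ) : ℝ) < 1)
        have h6 := abs_lt.mp h5
        omega
      rw [hk0] at hreal
      push_cast at hreal
      linarith
    have hS10 : f 1 = f 0 := by
      set S : Set ℝ := {t | f t = f 0} with hSdef
      have hopen : IsOpen S := by
        rw [isOpen_iff_mem_nhds]
        intro t₀ ht₀
        exact Filter.eventually_iff.mp ((hloc t₀).mono fun t ht => ht.trans ht₀)
      have hclosed : IsClosed S := by
        rw [← isOpen_compl_iff, isOpen_iff_mem_nhds]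
        intro t₀ ht₀
        exact Filter.eventually_iff.mp ((hloc t₀).mono fun t ht hmem => ht₀ (ht.symm.trans hmem))
      have huniv : S = Set.univ := IsClopen.eq_univ ⟨hclosed, hopen⟩ ⟨0, rfl⟩
      have : (1 : ℝ) ∈ S := huniv ▸ Set.mem_univ 1
      exact this
    have hlt' : ∀ t, lTheta (Bf t) = f t := by
      intro t
      rw [lTheta, if_neg (hnotS t)]
      rfl
    calc lTheta (LV V * A * (LV V)ᵀ) = lTheta (Bf 1) := by rw [hBf1]
      _ = f 1 := hlt' 1
      _ = f 0 := hS10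
      _ = lTheta (Bf 0) := (hlt' 0).symm
      _ = lTheta A := by rw [hBf0]
end

section
/- Let n ≥ 2 and let A be a real symmetric n×n matrix with eigenvalues λ₁ ≥ λ₂ ≥ … ≥ λₙ (with multiplicity). If Σ_{i=1}^n arctan λᵢ ≥ (n−2)π/2, then λ_{n−1} ≥ |λₙ|; in particular, the sum of any two eigenvalues λᵢ + λⱼ (i ≠ j) is nonnegative. -/
open Matrix
open scoped Classical


/-- if the decreasingly sorted eigenvalues `λ₁ ≥ … ≥ λₙ` of a real
symmetric `A` satisfy `Σ arctan λᵢ ≥ (n−2)π/2`, then `λ_{n−1} ≥ |λₙ|`; in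
particular the sum of any two distinct eigenvalues is nonnegative. -/
theorem stmt8 (n : ℕ) (hn : 2 ≤ n) (A : Matrix (Fin n) (Fin n) ℝ) (hA : A.IsHermitian)
    (lam : Fin n → ℝ) (hanti : Antitone lam)
    (hperm : ∃ σ : Equiv.Perm (Fin n), ∀ i, lam i = hA.eigenvalues (σ i))
    (h : ∑ i, Real.arctan (lam i) ≥ ((n : ℝ) - 2) * Real.pi / 2) :
    lam ⟨n - 2, by omega⟩ ≥ |lam ⟨n - 1, by omega⟩| ∧
      ∀ i j : Fin n, i ≠ j → 0 ≤ lam i + lam j := by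
  set i1 : Fin n := ⟨n - 2, by omega⟩ with hi1
  set i2 : Fin n := ⟨n - 1, by omega⟩ with hi2
  have hne : i1 ≠ i2 := by
    simp only [hi1, hi2, Ne, Fin.mk.injEq]
    omega
  set a := lam i1 with ha
  set b := lam i2 with hb
  have hab : b ≤ a := hanti (by simp [hi1, hi2, Fin.le_def]; omega)
  have key : 0 ≤ Real.arctan a + Real.arctan b := by
    have hs : ∑ i, Real.arctan (lam i)
        = (∑ i ∈ ({i1, i2} : Finset (Fin n))ᶜ, Real.arctan (lam i))
          + (Real.arctan a + Real.arctan b) := by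
      rw [← Finset.sum_compl_add_sum ({i1, i2} : Finset (Fin n))]
      congr 1
      rw [Finset.sum_insert (by simp [hne]), Finset.sum_singleton]
    have hcard : (({i1, i2} : Finset (Fin n))ᶜ).card = n - 2 := by
      rw [Finset.card_compl]
      rw [Finset.card_insert_of_notMem (by simp [hne]), Finset.card_singleton]
      simp
    have hbound : ∑ i ∈ ({i1, i2} : Finset (Fin n))ᶜ, Real.arctan (lam i)
        ≤ ((n : ℝ) - 2) * (Real.pi / 2) := by
      calc ∑ i ∈ ({i1, i2} : Finset (Fin n))ᶜ, Real.arctan (lam i)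
          ≤ (({i1, i2} : Finset (Fin n))ᶜ).card • (Real.pi / 2) :=
            Finset.sum_le_card_nsmul _ _ _
              (fun i _ => (Real.arctan_lt_pi_div_two _).le)
        _ = ((n : ℝ) - 2) * (Real.pi / 2) := by
            rw [hcard, nsmul_eq_mul, Nat.cast_sub hn]
            norm_num
    rw [hs] at h
    linarith
  have hnegb : -b ≤ a := by
    have : Real.arctan (-b) ≤ Real.arctan a := by
      rw [Real.arctan_neg]; linarith
    exact Real.arctan_strictMono.le_iff_le.mp this
  have habs : |b| ≤ a := abs_le.mpr ⟨by linarith, hab⟩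
  refine ⟨habs, fun i j hij => ?_⟩
  have hsum : ∀ i j : Fin n, i < j → 0 ≤ lam i + lam j := by
    intro i j hlt
    have h1 : lam i1 ≤ lam i := hanti (by
      simp only [hi1, Fin.le_def]
      have := hlt
      omega)
    have h2 : lam i2 ≤ lam j := hanti (by
      simp only [hi2, Fin.le_def]
      omega)
    have : -b ≤ a := hnegb
    linarith
  rcases lt_or_gt_of_ne hij with hlt | hgt
  · exact hsum i j hlt
  · have := hsum j i hgt; linarith
end

section
/- Let n ≥ 2 and let δ ∈ (0, π/2). Then there exists a real symmetric (n+1)×(n+1) matrix A = [[a₀₀, aᵀ],[a, A⁺]] such that Θ̃(A) ≥ (n−1)π/2 + δ, the spatial block A⁺ is not positive semidefinite, and A has two eigenvalues whose sum is strictly negative (so A is not 2-convex). -/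
open Matrix
open scoped Classical

section Aux

variable {m : Type*} [Fintype m] [DecidableEq m]

/-- Characteristic polynomial is invariant under unitary conjugation. -/
lemma charpoly_conj_unit (U D : Matrix m m ℝ) (h1 : U * star U = 1) :
    (U * D * star U).charpoly = D.charpoly := by
  classical
  set C := (Polynomial.C : ℝ →+* Polynomial ℝ)
  have hmap1 : (U * star U).map C = 1 := by rw [h1]; simp [Matrix.map_one]
  have key : charmatrix (U * D * star U) = U.map C * charmatrix D * (star U).map C := by
    have e1 : U.map ⇑C * Matrix.scalar m (Polynomial.X : Polynomial ℝ) * (star U).map ⇑C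
        = Matrix.scalar m (Polynomial.X : Polynomial ℝ) := by
      rw [Matrix.scalar_apply, ← Matrix.smul_one_eq_diagonal, mul_smul_comm, mul_one,
        Matrix.smul_mul, ← Matrix.map_mul, hmap1]
    have e2 : (U * D * star U).map ⇑C = U.map ⇑C * D.map ⇑C * (star U).map ⇑C := by
      rw [Matrix.map_mul, Matrix.map_mul]
    unfold charmatrix
    simp only [RingHom.mapMatrix_apply]
    rw [e2, Matrix.mul_sub, Matrix.sub_mul, e1]
  rw [Matrix.charpoly, Matrix.charpoly, key, Matrix.det_mul, Matrix.det_mul]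
  have hdet : (U.map ⇑C).det * ((star U).map ⇑C).det = 1 := by
    rw [← RingHom.mapMatrix_apply, ← RingHom.mapMatrix_apply, ← RingHom.map_det,
      ← RingHom.map_det, ← _root_.map_mul C, ← Matrix.det_mul, h1, Matrix.det_one, _root_.map_one C]
  calc (U.map ⇑C).det * (charmatrix D).det * ((star U).map ⇑C).det
      = (U.map ⇑C).det * ((star U).map ⇑C).det * (charmatrix D).det := by ring
    _ = (charmatrix D).det := by rw [hdet, one_mul]

/-- Charpoly of a real diagonal matrix. -/
lemma charpoly_diag (e : m → ℝ) :
    (Matrix.diagonal e).charpoly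
      = ((Finset.univ.val.map e).map fun a => Polynomial.X - Polynomial.C a).prod := by
  classical
  have hch : charmatrix (Matrix.diagonal e)
      = Matrix.diagonal fun i => Polynomial.X - Polynomial.C (e i) := by
    ext i j
    by_cases hij : i = j
    · subst hij; simp
    · simp [charmatrix_apply_ne _ _ _ hij, Matrix.diagonal_apply_ne _ hij]
  rw [Matrix.charpoly, hch, Matrix.det_diagonal, Finset.prod, Multiset.map_map]
  rfl

/-- The multiset of eigenvalues of a real diagonal matrix is the multiset of its
diagonal entries. -/
lemma eig_diag_multiset (d : m → ℝ) (h : (Matrix.diagonal d).IsHermitian) :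
    Finset.univ.val.map h.eigenvalues = Finset.univ.val.map d := by
  classical
  have h1 : (h.eigenvectorUnitary : Matrix m m ℝ)
      * star (h.eigenvectorUnitary : Matrix m m ℝ) = 1 :=
    Matrix.mem_unitaryGroup_iff.mp h.eigenvectorUnitary.2
  have hcp : (Matrix.diagonal d).charpoly = (Matrix.diagonal h.eigenvalues).charpoly := by
    conv_lhs => rw [h.spectral_theorem]
    rw [Unitary.conjStarAlgAut_apply, charpoly_conj_unit _ _ h1, RCLike.ofReal_real_eq_id, Function.id_comp]
  rw [charpoly_diag d, charpoly_diag h.eigenvalues] at hcp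
  have := congrArg Polynomial.roots hcp
  rwa [Polynomial.roots_multiset_prod_X_sub_C, Polynomial.roots_multiset_prod_X_sub_C,
    eq_comm] at this

/-- Sums of functions of eigenvalues of a diagonal matrix. -/
lemma sum_fun_eig_diag (d : m → ℝ) (h : (Matrix.diagonal d).IsHermitian) (g : ℝ → ℝ) :
    ∑ i, g (h.eigenvalues i) = ∑ i, g (d i) := by
  have key := congrArg (fun s : Multiset ℝ => (s.map g).sum) (eig_diag_multiset d h)
  simp only [Multiset.map_map, Function.comp] at key
  rw [Finset.sum_eq_multiset_sum, Finset.sum_eq_multiset_sum]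
  exact key

end Aux

/-- for every `δ ∈ (0, π/2)` there is a real symmetric `(n+1)×(n+1)`
matrix `A` with `Θ̃(A) ≥ (n−1)π/2 + δ` whose spatial block `A⁺` is not positive
semidefinite and which has two eigenvalues with strictly negative sum. -/
theorem stmt18 (n : ℕ) (hn : 2 ≤ n) (δ : ℝ) (hδ : δ ∈ Set.Ioo 0 (Real.pi / 2)) :
    ∃ A : Matrix (Unit ⊕ Fin n) (Unit ⊕ Fin n) ℝ, ∃ hA : A.IsHermitian,
      lTheta A ≥ ((n : ℝ) - 1) * Real.pi / 2 + δ ∧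
      ¬ (Aplus A).PosSemidef ∧
      ∃ i j, i ≠ j ∧ hA.eigenvalues i + hA.eigenvalues j < 0 := by
  classical
  obtain ⟨k, rfl⟩ : ∃ k, n = k + 2 := ⟨n - 2, by omega⟩
  obtain ⟨hδ0, hδπ⟩ := hδ
  have hπ := Real.pi_pos
  set ε : ℝ := (Real.pi / 2 - δ) / 2 with hε_def
  have hε0 : 0 < ε := by rw [hε_def]; linarith
  have hεπ : ε < Real.pi / 4 := by rw [hε_def]; linarith
  have hk1 : (1 : ℝ) ≤ (k : ℝ) + 1 := by
    have : (0 : ℝ) ≤ (k : ℝ) := Nat.cast_nonneg k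
    linarith
  have hk1pos : (0 : ℝ) < (k : ℝ) + 1 := by positivity
  set θ₀ : ℝ := Real.pi / 2 - ε / ((k : ℝ) + 1) with hθ₀_def
  set θ₁ : ℝ := ε + δ - Real.pi / 2 with hθ₁_def
  have hεk0 : 0 < ε / ((k : ℝ) + 1) := div_pos hε0 hk1pos
  have hεkε : ε / ((k : ℝ) + 1) ≤ ε := by
    rw [div_le_iff₀ hk1pos]; nlinarith
  have hθ₀mem : -(Real.pi / 2) < θ₀ ∧ θ₀ < Real.pi / 2 := by
    constructor <;> rw [hθ₀_def] <;> nlinarith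
  have hθ₁neg : θ₁ < 0 := by rw [hθ₁_def]; linarith
  have hθ₁mem : -(Real.pi / 2) < θ₁ ∧ θ₁ < Real.pi / 2 := by
    constructor <;> rw [hθ₁_def] <;> linarith
  set t : ℝ := Real.tan θ₀ with ht_def
  set s : ℝ := Real.tan θ₁ with hs_def
  have hat : Real.arctan t = θ₀ := Real.arctan_tan hθ₀mem.1 hθ₀mem.2
  have has : Real.arctan s = θ₁ := Real.arctan_tan hθ₁mem.1 hθ₁mem.2
  have hsneg : s < 0 := Real.tan_neg_of_neg_of_pi_div_two_lt hθ₁neg hθ₁mem.1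
  set d : Fin (k + 2) → ℝ := fun i => if i = 0 then s else t with hd_def
  set D : Unit ⊕ Fin (k + 2) → ℝ := Sum.elim (fun _ => 0) d with hD_def
  refine ⟨Matrix.diagonal D, Matrix.isHermitian_diagonal D, ?_, ?_, ?_⟩
  · -- lTheta bound
    have hS : inS (Matrix.diagonal D) := by
      constructor
      · intro j
        rcases j with j | j
        · simp [Matrix.diagonal_apply_eq, hD_def]
        · exact Matrix.diagonal_apply_ne D (by simp)
      · intro i
        rcases i with i | i
        · simp [Matrix.diagonal_apply_eq, hD_def]
        · exact Matrix.diagonal_apply_ne' D (by simp)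
    have hAp : Aplus (Matrix.diagonal D) = Matrix.diagonal d := by
      ext i j
      by_cases hij : i = j
      · subst hij; simp [Aplus, hD_def]
      · simp [Aplus, Matrix.diagonal_apply_ne _ hij,
          Matrix.diagonal_apply_ne D (show (Sum.inr i : Unit ⊕ Fin (k+2)) ≠ Sum.inr j by
            simpa using hij)]
    have hHerm : (Matrix.diagonal d).IsHermitian := Matrix.isHermitian_diagonal d
    have hsum : ∑ i, Real.arctan (hHerm.eigenvalues i) = ∑ i, Real.arctan (d i) :=
      sum_fun_eig_diag d hHerm Real.arctan
    have hsum2 : ∑ i : Fin (k + 2), Real.arctan (d i) = θ₁ + ((k : ℝ) + 1) * θ₀ := by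
      rw [Fin.sum_univ_succ]
      have h0 : Real.arctan (d 0) = θ₁ := by rw [hd_def]; simp [has]
      have hs' : ∀ i : Fin (k + 1), Real.arctan (d i.succ) = θ₀ := by
        intro i
        have : d i.succ = t := by rw [hd_def]; simp [Fin.succ_ne_zero]
        rw [this, hat]
      rw [h0]
      rw [Finset.sum_congr rfl fun i _ => hs' i, Finset.sum_const]
      simp [mul_comm]
    rw [lTheta, if_pos hS, hAp, ltheta, dif_pos hHerm, hsum, hsum2]
    have hcancel : ((k : ℝ) + 1) * (ε / ((k : ℝ) + 1)) = ε := by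
      field_simp
    have : θ₁ + ((k : ℝ) + 1) * θ₀ + Real.pi / 2
        = (((k : ℝ) + 2) - 1) * Real.pi / 2 + δ := by
      rw [hθ₁_def, hθ₀_def, mul_sub, hcancel]; ring
    rw [ge_iff_le]
    push_cast
    linarith [le_of_eq this.symm]
  · -- not PosSemidef
    intro hPSD
    have hAp : Aplus (Matrix.diagonal D) = Matrix.diagonal d := by
      ext i j
      by_cases hij : i = j
      · subst hij; simp [Aplus, hD_def]
      · simp [Aplus, Matrix.diagonal_apply_ne _ hij,
          Matrix.diagonal_apply_ne D (show (Sum.inr i : Unit ⊕ Fin (k+2)) ≠ Sum.inr j by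
            simpa using hij)]
    rw [hAp] at hPSD
    have := Matrix.posSemidef_diagonal_iff.mp hPSD 0
    rw [hd_def] at this
    simp at this
    linarith
  · -- two eigenvalues with negative sum
    set hA := Matrix.isHermitian_diagonal D with hA_def
    have hmul := eig_diag_multiset D hA
    have hs_mem : s ∈ Finset.univ.val.map hA.eigenvalues := by
      rw [hmul]
      exact Multiset.mem_map.mpr ⟨Sum.inr 0, by simp, by rw [hD_def]; simp [hd_def]⟩
    have h0_mem : (0 : ℝ) ∈ Finset.univ.val.map hA.eigenvalues := by
      rw [hmul]
      exact Multiset.mem_map.mpr ⟨Sum.inl (), by simp, by rw [hD_def]; simp⟩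
    obtain ⟨i, _, hi⟩ := Multiset.mem_map.mp hs_mem
    obtain ⟨j, _, hj⟩ := Multiset.mem_map.mp h0_mem
    refine ⟨i, j, ?_, ?_⟩
    · intro hij
      rw [hij, hj] at hi
      exact absurd hi.symm (ne_of_lt hsneg)
    · rw [hi, hj]
      linarith
end
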